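/- Let p be an odd prime and K = F_{p^2}. For a ∈ F_p with a ≠ 0, the polynomial X^p + X - a splits into p distinct linear factors over K, and none of its roots lies in K_- = {α ∈ K : α^p = -α}. -/

import Mathlib

/-!
Write `f = X^p + X - a`. Since `a^p = a`, the Frobenius gives `f^p = X^{p^2} + X^p - a`, hence
`f ∣ f^p - f = X^{p^2} - X`, which splits over `𝔽_{p^2}`; so `f` splits there. As `f' = 1`, `f` is
separable, so its `p` roots are distinct. A root `η` with `η^p = -η` would give `f(η) = -a ≠ 0`.
-/

open Polynomial
open scoped Classical

section CommRing

variable {R : Type*} [CommRing R] {p : ℕ}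

theorem natDegree_X_pow_add_X_sub_C [Nontrivial R] (hp : 1 < p) (a : R) :
    (X ^ p + X - C a).natDegree = p := by
  compute_degree
  · simp [hp.ne, (zero_lt_one.trans hp).ne']
  all_goals omega

variable (p) [CharP R p]

theorem separable_X_pow_add_X_sub_C (a : R) : (X ^ p + X - C a).Separable :=
  ⟨0, 1, by simp [derivative_X_pow]⟩

variable [Fact p.Prime]

theorem X_pow_add_X_sub_C_pow {a : R} (ha : a ^ p = a) :
    (X ^ p + X - C a) ^ p = X ^ p ^ 2 + X ^ p - C a := by
  rw [sub_pow_char, add_pow_char, ← pow_mul, ← sq, ← C_pow, ha]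

theorem X_pow_add_X_sub_C_dvd {a : R} (ha : a ^ p = a) :
    X ^ p + X - C a ∣ (X ^ p ^ 2 - X : R[X]) := by
  have h : (X ^ p ^ 2 - X : R[X]) = (X ^ p + X - C a) ^ p - (X ^ p + X - C a) := by
    rw [X_pow_add_X_sub_C_pow p ha]; ring
  rw [h]
  exact dvd_sub (dvd_pow_self _ (Fact.out : p.Prime).ne_zero) dvd_rfl

end CommRing

theorem splits_X_pow_add_X_sub_C {K : Type*} [Field K] (p : ℕ) [Fact p.Prime] [CharP K p]
    (hK : Nat.card K = p ^ 2) {a : K} (ha : a ^ p = a) : (X ^ p + X - C a).Splits :=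
  (hK ▸ splits_X_pow_nat_card_sub_X).of_dvd
    (FiniteField.X_pow_card_pow_sub_X_ne_zero K two_ne_zero (Fact.out : p.Prime).one_lt)
    (X_pow_add_X_sub_C_dvd p ha)

theorem stmt_4_general (p : ℕ) [Fact p.Prime] (a : ZMod p) (ha : a ≠ 0) :
    (X ^ p + X - C (algebraMap (ZMod p) (GaloisField p 2) a)).Splits ∧
    (X ^ p + X - C (algebraMap (ZMod p) (GaloisField p 2) a)).roots.toFinset.card = p ∧
    ∀ η : GaloisField p 2,
      (X ^ p + X - C (algebraMap (ZMod p) (GaloisField p 2) a)).IsRoot η → η ^ p ≠ -η := by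
  set a' := algebraMap (ZMod p) (GaloisField p 2) a
  have hsplits : (X ^ p + X - C a').Splits :=
    splits_X_pow_add_X_sub_C p (GaloisField.card p 2 two_ne_zero)
      (by rw [← map_pow, ZMod.pow_card])
  refine ⟨hsplits, ?_, fun η hη hη_anti => ?_⟩
  · rw [Multiset.toFinset_card_of_nodup (nodup_roots (separable_X_pow_add_X_sub_C p a')),
      ← hsplits.natDegree_eq_card_roots, natDegree_X_pow_add_X_sub_C (Fact.out : p.Prime).one_lt]
  · have ha'_zero : a' = 0 := by simpa [hη_anti, eq_comm] using hη.eq_zero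
    exact ha ((map_eq_zero _).mp ha'_zero)

/-- For an odd prime `p`, `K = 𝔽_{p²}` and a nonzero `a ∈ 𝔽_p`, the polynomial
`X^p + X - a` splits into `p` distinct linear factors over `K` and none of its roots
lies in `K₋ = {α : α^p = -α}`. -/
theorem stmt_4 (p : ℕ) [Fact p.Prime] (hodd : Odd p) (a : ZMod p) (ha : a ≠ 0) :
    (X ^ p + X - C (algebraMap (ZMod p) (GaloisField p 2) a)).Splits ∧
    (X ^ p + X - C (algebraMap (ZMod p) (GaloisField p 2) a)).roots.toFinset.card = p ∧
    ∀ η : GaloisField p 2,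
      (X ^ p + X - C (algebraMap (ZMod p) (GaloisField p 2) a)).IsRoot η → η ^ p ≠ -η :=
  stmt_4_general p a ha
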